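/- arXiv:2507.10840 — 3 statements merged into one kernel-verified Lean document; each statement's English description precedes it below -/
import Mathlib

section
/- Every 3-edge zig-zag path is monotone: if a path (a,b,c,d) has its endpoints a and d lying in opposite open halfplanes determined by the line through the middle edge bc, then there exists a direction u such that all three directed edges ab, bc, cd have positive inner product with u. -/
set_option maxHeartbeats 1000000


/-- Every 3-edge zig-zag path is monotone: if the endpoints `a` and `d` lie in opposite
open halfplanes determined by the line through the middle edge `bc`, then there is a
direction `u` in which all three directed edges have positive inner product. -/
theorem zigzag_path_monotone
    (a b c d : ℝ × ℝ)
    (hgen : ∀ p q r : ℝ × ℝ, p ∈ ({a, b, c, d} : Set (ℝ × ℝ)) →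
      q ∈ ({a, b, c, d} : Set (ℝ × ℝ)) → r ∈ ({a, b, c, d} : Set (ℝ × ℝ)) →
      p ≠ q → q ≠ r → p ≠ r → ¬ Collinear ℝ ({p, q, r} : Set (ℝ × ℝ)))
    (hopp : ((c - b).1 * (a - b).2 - (c - b).2 * (a - b).1) *
            ((c - b).1 * (d - b).2 - (c - b).2 * (d - b).1) < 0) :
    ∃ u : ℝ × ℝ, u ≠ 0 ∧
      0 < (b - a).1 * u.1 + (b - a).2 * u.2 ∧
      0 < (c - b).1 * u.1 + (c - b).2 * u.2 ∧
      0 < (d - c).1 * u.1 + (d - c).2 * u.2 := by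
  clear hgen
  simp only [Prod.fst_sub, Prod.snd_sub] at hopp ⊢
  set v1 := c.1 - b.1 with hv1
  set v2 := c.2 - b.2 with hv2
  set e11 := b.1 - a.1 with he11
  set e12 := b.2 - a.2 with he12
  set e31 := d.1 - c.1 with he31
  set e32 := d.2 - c.2 with he32
  set c1 : ℝ := v1 * e12 - v2 * e11 with hc1
  set c3 : ℝ := v1 * e32 - v2 * e31 with hc3
  set p1 : ℝ := e11 * v1 + e12 * v2 with hp1
  set p3 : ℝ := e31 * v1 + e32 * v2 with hp3
  have hc : 0 < c1 * c3 := by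
    have key : (v1 * (a.2 - b.2) - v2 * (a.1 - b.1)) *
        (v1 * (d.2 - b.2) - v2 * (d.1 - b.1)) = -(c1 * c3) := by
      rw [hc1, hc3, he11, he12, he31, he32, hv1, hv2]; ring
    rw [key] at hopp; linarith
  have hc1ne : c1 ≠ 0 := by
    intro h; rw [h] at hc; simp at hc
  have hc1sq : 0 < c1 ^ 2 := by positivity
  have hc3sq : 0 < c3 ^ 2 := by
    have : c3 ≠ 0 := by intro h; rw [h] at hc; simp at hc
    positivity
  have hvne : 0 < v1 ^ 2 + v2 ^ 2 := by
    by_contra h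
    push_neg at h
    have h1 : v1 = 0 := by nlinarith [sq_nonneg v1, sq_nonneg v2]
    have h2 : v2 = 0 := by nlinarith [sq_nonneg v1, sq_nonneg v2]
    apply hc1ne; rw [hc1, h1, h2]; ring
  set T : ℝ := (1 + |p1|) * c3 + (1 + |p3|) * c1 with hT
  clear_value T p3 p1 c3 c1 e32 e31 e12 e11 v2 v1
  have habs1 : 0 < p1 + 1 + |p1| := by
    have := neg_abs_le p1; have := abs_nonneg p1; linarith
  have habs3 : 0 < p3 + 1 + |p3| := by
    have := neg_abs_le p3; have := abs_nonneg p3; linarith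
  have hb1 : (0:ℝ) < 1 + |p1| := by positivity
  have hb3 : (0:ℝ) < 1 + |p3| := by positivity
  refine ⟨((c1 * c3) * v1 - T * v2, (c1 * c3) * v2 + T * v1), ?_, ?_, ?_, ?_⟩
  · intro h
    have h1 : (c1 * c3) * v1 - T * v2 = 0 := congrArg Prod.fst h
    have h2 : (c1 * c3) * v2 + T * v1 = 0 := congrArg Prod.snd h
    have comb : (c1 * c3) * (v1 ^ 2 + v2 ^ 2)
        = v1 * ((c1 * c3) * v1 - T * v2) + v2 * ((c1 * c3) * v2 + T * v1) := by ring
    rw [h1, h2] at comb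
    have := mul_pos hc hvne
    nlinarith [comb]
  · show 0 < e11 * ((c1 * c3) * v1 - T * v2) + e12 * ((c1 * c3) * v2 + T * v1)
    have key : e11 * ((c1 * c3) * v1 - T * v2) + e12 * ((c1 * c3) * v2 + T * v1)
        = (c1 * c3) * (p1 + 1 + |p1|) + (1 + |p3|) * c1 ^ 2 := by
      rw [hT, hp1, hp3, hc1]; ring
    rw [key]
    have A := mul_pos hc habs1
    have B := mul_pos hb3 hc1sq
    linarith
  · show 0 < v1 * ((c1 * c3) * v1 - T * v2) + v2 * ((c1 * c3) * v2 + T * v1)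
    have key : v1 * ((c1 * c3) * v1 - T * v2) + v2 * ((c1 * c3) * v2 + T * v1)
        = (c1 * c3) * (v1 ^ 2 + v2 ^ 2) := by ring
    rw [key]
    exact mul_pos hc hvne
  · show 0 < e31 * ((c1 * c3) * v1 - T * v2) + e32 * ((c1 * c3) * v2 + T * v1)
    have key : e31 * ((c1 * c3) * v1 - T * v2) + e32 * ((c1 * c3) * v2 + T * v1)
        = (c1 * c3) * (p3 + 1 + |p3|) + (1 + |p1|) * c3 ^ 2 := by
      rw [hT, hp1, hp3, hc3]; ring
    rw [key]
    have A := mul_pos hc habs3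
    have B := mul_pos hb1 hc3sq
    linarith
end

section
/- Suppose a set E of m edges can be repeatedly reduced by removing, at each step where the current edge count m_i satisfies M/2^i < m_i ≤ M/2^{i-1}, a matching of size at least k_i + 1 with k_i ≥ √(m_i/(2^9 n)) ≥ c'·√(M/(2^i n)). Then the total number of matchings removed to exhaust E is O(√(M·n)), and for M = Θ(n^{5/3}) this is O(n^{4/3}). -/
lemma key_ineq (m k n : ℝ) (hn : 1 ≤ n) (hk : 1 ≤ k) (hkm : k ≤ m)
    (hks : Real.sqrt (m / (2 ^ 9 * n)) ≤ k) :
    1 + 64 * Real.sqrt ((m - k) * n) ≤ 64 * Real.sqrt (m * n) := by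
  have hm1 : 1 ≤ m := hk.trans hkm
  have hmn : (1:ℝ) ≤ m * n := by nlinarith
  set s := Real.sqrt (m * n) with hsdef
  set b := Real.sqrt ((m - k) * n) with hbdef
  have hs0 : 0 ≤ s := Real.sqrt_nonneg _
  have hb0 : 0 ≤ b := Real.sqrt_nonneg _
  have hs1 : 1 ≤ s := by
    rw [hsdef, show (1:ℝ) = Real.sqrt 1 by simp]
    exact Real.sqrt_le_sqrt hmn
  have hs2 : s ^ 2 = m * n := Real.sq_sqrt (by nlinarith)
  have hb2 : b ^ 2 = (m - k) * n := Real.sq_sqrt (by nlinarith)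
  have hbs : b ≤ s := Real.sqrt_le_sqrt (by nlinarith)
  have hk2 : m / (2 ^ 9 * n) ≤ k ^ 2 := by
    have h := pow_le_pow_left₀ (Real.sqrt_nonneg (m / (2 ^ 9 * n))) hks 2
    rwa [Real.sq_sqrt (by positivity)] at h
  have hk2' : m ≤ 2 ^ 9 * n * k ^ 2 := by
    rw [div_le_iff₀ (by positivity)] at hk2; linarith
  have hkn : s ≤ 23 * (k * n) := by
    nlinarith [sq_nonneg (23 * (k * n) - s), sq_nonneg (23 * (k * n) + s)]
  nlinarith [mul_nonneg hs0 hb0, sq_nonneg (s - b), sq_nonneg (s + b)]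

/-- Abstract counting lemma behind Phase II: a set of `M` edges on `n` vertices, from any
nonempty subset of which one can always remove a "matching" of size at least
`√(m'/(2⁹ n))`, can be fully decomposed into `O(√(M·n))` matchings. -/
theorem iterative_matching_removal :
    ∃ C : ℝ, 0 < C ∧
      ∀ (α : Type) (Q : Finset α → Prop) (n : ℕ) (E₀ : Finset α), 0 < n →
        (∀ E' ⊆ E₀, E'.Nonempty →
          ∃ P ⊆ E', Q P ∧ Real.sqrt ((E'.card : ℝ) / (2 ^ 9 * n)) ≤ P.card) →
        ∃ F : Finset (Finset α),
          (∀ P ∈ F, Q P ∧ P ⊆ E₀) ∧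
          (∀ e ∈ E₀, ∃ P ∈ F, e ∈ P) ∧
          (F : Set (Finset α)).Pairwise (fun P P' => Disjoint P P') ∧
          (F.card : ℝ) ≤ C * Real.sqrt ((E₀.card : ℝ) * n) := by
  refine ⟨64, by norm_num, ?_⟩
  intro α Q n E₀ hn
  have hn1 : (1:ℝ) ≤ n := by exact_mod_cast hn
  induction E₀ using Finset.strongInductionOn with
  | _ E₀ ih =>
  intro hrem
  classical
  by_cases hE : E₀.Nonempty
  · obtain ⟨P, hPE, hQP, hPcard⟩ := hrem E₀ subset_rfl hE
    have hm : 0 < E₀.card := hE.card_pos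
    have hPpos : 0 < P.card := by
      have h1 : (0:ℝ) < Real.sqrt ((E₀.card : ℝ) / (2 ^ 9 * n)) := by
        apply Real.sqrt_pos.mpr
        have : (0:ℝ) < E₀.card := by exact_mod_cast hm
        positivity
      have : (0:ℝ) < P.card := lt_of_lt_of_le h1 hPcard
      exact_mod_cast this
    have hPne : P.Nonempty := Finset.card_pos.mp hPpos
    have hkm : P.card ≤ E₀.card := Finset.card_le_card hPE
    have hsub : E₀ \ P ⊂ E₀ := by
      apply Finset.sdiff_ssubset hPE hPne
    obtain ⟨F₁, hF₁Q, hF₁cov, hF₁pd, hF₁card⟩ :=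
      ih (E₀ \ P) hsub (fun E' hE' hne => hrem E' (hE'.trans (Finset.sdiff_subset)) hne)
    have hPnotin : P ∉ F₁ := by
      intro hmem
      have hPsub : P ⊆ E₀ \ P := (hF₁Q P hmem).2
      obtain ⟨e, he⟩ := hPne
      exact (Finset.mem_sdiff.mp (hPsub he)).2 he
    refine ⟨insert P F₁, ?_, ?_, ?_, ?_⟩
    · intro P' hP'
      rcases Finset.mem_insert.mp hP' with rfl | h
      · exact ⟨hQP, hPE⟩
      · exact ⟨(hF₁Q P' h).1, (hF₁Q P' h).2.trans Finset.sdiff_subset⟩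
    · intro e he
      by_cases heP : e ∈ P
      · exact ⟨P, Finset.mem_insert_self _ _, heP⟩
      · obtain ⟨P', hP', heP'⟩ := hF₁cov e (Finset.mem_sdiff.mpr ⟨he, heP⟩)
        exact ⟨P', Finset.mem_insert_of_mem hP', heP'⟩
    · rw [Finset.coe_insert]
      apply Set.Pairwise.insert hF₁pd
      intro P' hP' hne
      have hdisj : Disjoint P P' := by
        have : P' ⊆ E₀ \ P := (hF₁Q P' hP').2
        exact (Finset.disjoint_sdiff.mono_right this)
      exact ⟨hdisj, hdisj.symm⟩
    · have hcard : (insert P F₁).card ≤ F₁.card + 1 := Finset.card_insert_le _ _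
      have hE₁card : ((E₀ \ P).card : ℝ) = (E₀.card : ℝ) - P.card := by
        rw [Finset.card_sdiff_of_subset hPE, Nat.cast_sub hkm]
      have key := key_ineq (E₀.card : ℝ) (P.card : ℝ) (n : ℝ) hn1
        (by exact_mod_cast hPpos) (by exact_mod_cast hkm) hPcard
      calc ((insert P F₁).card : ℝ) ≤ (F₁.card : ℝ) + 1 := by exact_mod_cast hcard
        _ ≤ 64 * Real.sqrt (((E₀ \ P).card : ℝ) * n) + 1 := by linarith
        _ = 1 + 64 * Real.sqrt (((E₀.card : ℝ) - P.card) * n) := by rw [hE₁card]; ring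
        _ ≤ 64 * Real.sqrt ((E₀.card : ℝ) * n) := key
  · rw [Finset.not_nonempty_iff_eq_empty] at hE
    subst hE
    refine ⟨∅, by simp, by simp, by simp, by simp only [Finset.card_empty, Nat.cast_zero]; positivity⟩
end

section
/- Let A be a finite point set in general position and a,b ∈ A. The zig-zag construction — starting from edge ab and repeatedly choosing the next point b_i minimizing the angle ∠ b_{i-2} b_{i-1} b_i among remaining points of A_1 (the points of A on one side of line ab) — produces a noncrossing path visiting all points of A_1 ∪ {a,b}. -/
open EuclideanGeometry
open scoped RealInnerProductSpace

noncomputable def cross2 (u v : EuclideanSpace ℝ (Fin 2)) : ℝ := u 0 * v 1 - u 1 * v 0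

lemma inner_coords (u v : EuclideanSpace ℝ (Fin 2)) : ⟪u, v⟫ = u 0 * v 0 + u 1 * v 1 := by
  simp [PiLp.inner_apply, RCLike.inner_apply, Fin.sum_univ_two]; ring

lemma norm_sq_coords (u : EuclideanSpace ℝ (Fin 2)) : ‖u‖^2 = u 0^2 + u 1^2 := by
  rw [EuclideanSpace.norm_eq, Real.sq_sqrt (by positivity)]
  simp [Fin.sum_univ_two, sq_abs]

/-- Core trigonometric fact. -/
lemma core_trig (c s c' s' : ℝ) (hs : 0 < s) (hs' : 0 < s')
    (h : Real.arccos (c / Real.sqrt (c^2+s^2)) ≤ Real.arccos (c' / Real.sqrt (c'^2+s'^2))) :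
    0 ≤ c * s' - s * c' := by
  set R := Real.sqrt (c^2+s^2) with hRdef
  set R' := Real.sqrt (c'^2+s'^2) with hR'def
  have hR : 0 < R := Real.sqrt_pos.2 (by positivity)
  have hR' : 0 < R' := Real.sqrt_pos.2 (by positivity)
  have hR2 : R^2 = c^2 + s^2 := Real.sq_sqrt (by positivity)
  have hR'2 : R'^2 = c'^2 + s'^2 := Real.sq_sqrt (by positivity)
  have hx1 : -1 ≤ c / R := by rw [le_div_iff₀ hR]; nlinarith
  have hx2 : c / R ≤ 1 := by rw [div_le_one hR]; nlinarith
  have hy1 : -1 ≤ c' / R' := by rw [le_div_iff₀ hR']; nlinarith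
  have hy2 : c' / R' ≤ 1 := by rw [div_le_one hR']; nlinarith
  set θ := Real.arccos (c / R)
  set θ' := Real.arccos (c' / R')
  have hcos : Real.cos θ = c / R := Real.cos_arccos hx1 hx2
  have hcos' : Real.cos θ' = c' / R' := Real.cos_arccos hy1 hy2
  have hsin : Real.sin θ = s / R := by
    rw [Real.sin_arccos]
    have h1 : 1 - (c/R)^2 = (s/R)^2 := by field_simp; nlinarith
    rw [h1, Real.sqrt_sq (by positivity)]
  have hsin' : Real.sin θ' = s' / R' := by
    rw [Real.sin_arccos]
    have h1 : 1 - (c'/R')^2 = (s'/R')^2 := by field_simp; nlinarith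
    rw [h1, Real.sqrt_sq (by positivity)]
  have hkey : c * s' - s * c' = (R * R') * Real.sin (θ' - θ) := by
    rw [Real.sin_sub, hcos, hcos', hsin, hsin']
    field_simp
  rw [hkey]
  have h0 : 0 ≤ θ' - θ := sub_nonneg.2 h
  have hπ : θ' - θ ≤ Real.pi := by
    have := Real.arccos_le_pi (c' / R')
    have := Real.arccos_nonneg (c / R)
    simp only [θ, θ'] at *
    linarith
  have := Real.sin_nonneg_of_nonneg_of_le_pi h0 hπ
  positivity

/-- Key lemma: angular minimality gives sidedness. -/
lemma key_side (u v v' : EuclideanSpace ℝ (Fin 2)) (σ : ℝ) (hσ : σ = 1 ∨ σ = -1)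
    (h1 : 0 < σ * cross2 u v) (h2 : 0 < σ * cross2 u v')
    (hang : InnerProductGeometry.angle u v ≤ InnerProductGeometry.angle u v') :
    0 ≤ σ * cross2 v v' := by
  have hσ2 : σ^2 = 1 := by rcases hσ with h | h <;> rw [h] <;> norm_num
  set c := ⟪u, v⟫ with hc
  set s := σ * cross2 u v with hs
  set c' := ⟪u, v'⟫ with hc'
  set s' := σ * cross2 u v' with hs'
  have hcr : cross2 u v ≠ 0 := by
    intro h
    have h1' := h1
    rw [hs, h, mul_zero] at h1'
    exact lt_irrefl 0 h1'
  have h00 : ¬(u 0 = 0 ∧ u 1 = 0) := fun ⟨h0, h1'⟩ => hcr (by simp [cross2, h0, h1'])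
  have husum : u 0 ^ 2 + u 1 ^ 2 ≠ 0 := by
    intro h; exact h00 ⟨by nlinarith, by nlinarith⟩
  have hupos : 0 < ‖u‖^2 := by
    rw [norm_sq_coords]
    exact lt_of_le_of_ne (by positivity) (Ne.symm husum)
  have hN : ‖u‖ * ‖v‖ = Real.sqrt (c^2 + s^2) := by
    have hq : (‖u‖ * ‖v‖)^2 = c^2 + s^2 := by
      rw [mul_pow, norm_sq_coords, norm_sq_coords, hc, inner_coords, hs]
      simp only [cross2]
      linear_combination (-(u 0 * v 1 - u 1 * v 0)^2) * hσ2
    rw [← hq, Real.sqrt_sq (by positivity)]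
  have hN' : ‖u‖ * ‖v'‖ = Real.sqrt (c'^2 + s'^2) := by
    have hq : (‖u‖ * ‖v'‖)^2 = c'^2 + s'^2 := by
      rw [mul_pow, norm_sq_coords, norm_sq_coords, hc', inner_coords, hs']
      simp only [cross2]
      linear_combination (-(u 0 * v' 1 - u 1 * v' 0)^2) * hσ2
    rw [← hq, Real.sqrt_sq (by positivity)]
  have hang' : Real.arccos (c / Real.sqrt (c^2+s^2)) ≤ Real.arccos (c' / Real.sqrt (c'^2+s'^2)) := by
    rw [← hN, ← hN']
    exact hang
  have hcore := core_trig c s c' s' h1 h2 hang'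
  have hid : c * s' - s * c' = ‖u‖^2 * (σ * cross2 v v') := by
    rw [hc, hc', hs, hs', inner_coords, inner_coords, norm_sq_coords]
    simp only [cross2]
    ring
  nlinarith [hcore, hid, hupos]

lemma collinear_of_cross2 (x y z : EuclideanSpace ℝ (Fin 2))
    (h : cross2 (y - x) (z - x) = 0) :
    Collinear ℝ ({x, y, z} : Set (EuclideanSpace ℝ (Fin 2))) := by
  simp only [cross2, PiLp.sub_apply] at h
  by_cases hxy : y = x
  · subst hxy
    have : ({y, y, z} : Set (EuclideanSpace ℝ (Fin 2))) = {y, z} := by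
      simp [Set.insert_comm]
    rw [this]
    exact collinear_pair ℝ y z
  · have hne : y 0 - x 0 ≠ 0 ∨ y 1 - x 1 ≠ 0 := by
      by_contra hc
      push_neg at hc
      apply hxy
      ext i
      fin_cases i <;> simp <;> linarith [hc.1, hc.2]
    obtain ⟨t, ht0, ht1⟩ : ∃ t : ℝ, z 0 - x 0 = t * (y 0 - x 0) ∧ z 1 - x 1 = t * (y 1 - x 1) := by
      rcases hne with h0 | h1
      · exact ⟨(z 0 - x 0) / (y 0 - x 0), by field_simp, by field_simp; nlinarith⟩
      · exact ⟨(z 1 - x 1) / (y 1 - x 1), by field_simp; nlinarith, by field_simp⟩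
    rw [collinear_iff_exists_forall_eq_smul_vadd]
    refine ⟨x, y - x, ?_⟩
    intro p hp
    rcases hp with rfl | rfl | rfl
    · exact ⟨0, by simp⟩
    · exact ⟨1, by simp⟩
    · refine ⟨t, ?_⟩
      ext i
      fin_cases i <;> simp [PiLp.sub_apply] <;> linarith

/-- The zig-zag construction: starting from the edge `ab` and repeatedly choosing the
next point minimizing the angle `∠ b_{i-2} b_{i-1} b_i` among remaining points of `A₁`
(the points of `A` strictly on one side of the line `ab`) produces a noncrossing path
visiting all points of `A₁ ∪ {a, b}`. -/
theorem zigzag_construction_noncrossing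
    (A : Finset (EuclideanSpace ℝ (Fin 2)))
    (hgen : ∀ p ∈ A, ∀ q ∈ A, ∀ r ∈ A, p ≠ q → q ≠ r → p ≠ r →
      ¬ Collinear ℝ ({p, q, r} : Set (EuclideanSpace ℝ (Fin 2))))
    (a b : EuclideanSpace ℝ (Fin 2)) (ha : a ∈ A) (hb : b ∈ A) (hab : a ≠ b)
    (A₁ : Finset (EuclideanSpace ℝ (Fin 2)))
    (hA₁ : A₁ = A.filter (fun p =>
      0 < (b 0 - a 0) * (p 1 - a 1) - (b 1 - a 1) * (p 0 - a 0)))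
    (w : ℕ → EuclideanSpace ℝ (Fin 2))
    (hw0 : w 0 = a) (hw1 : w 1 = b)
    (hwmem : ∀ i, 2 ≤ i → i < A₁.card + 2 → w i ∈ A₁)
    (hwinj : ∀ i j, 2 ≤ i → i < j → j < A₁.card + 2 → w i ≠ w j)
    (hgreedy : ∀ i, 2 ≤ i → i < A₁.card + 2 → ∀ p ∈ A₁,
      (∀ j, 2 ≤ j → j < i → w j ≠ p) →
      ∠ (w (i - 2)) (w (i - 1)) (w i) ≤ ∠ (w (i - 2)) (w (i - 1)) p) :
    (w '' Set.Iio (A₁.card + 2) = (A₁ : Set (EuclideanSpace ℝ (Fin 2))) ∪ {a, b}) ∧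
    (∀ i j, i + 1 < A₁.card + 2 → j + 1 < A₁.card + 2 → i + 1 < j →
      Disjoint (segment ℝ (w i) (w (i + 1))) (segment ℝ (w j) (w (j + 1)))) ∧
    (∀ i, i + 2 < A₁.card + 2 →
      segment ℝ (w i) (w (i + 1)) ∩ segment ℝ (w (i + 1)) (w (i + 2))
        = {w (i + 1)}) := by
  classical
  have hA₁sub : ∀ p ∈ A₁, p ∈ A := by
    intro p hp
    rw [hA₁] at hp
    exact (Finset.mem_filter.1 hp).1
  have hA₁cr : ∀ p ∈ A₁, 0 < (b 0 - a 0) * (p 1 - a 1) - (b 1 - a 1) * (p 0 - a 0) := by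
    intro p hp
    rw [hA₁] at hp
    exact (Finset.mem_filter.1 hp).2
  have hbA₁ : b ∉ A₁ := by
    intro h
    have h2 := hA₁cr b h
    nlinarith
  have hwA : ∀ k, 1 ≤ k → k < A₁.card + 2 → w k ∈ A := by
    intro k h1 h2
    rcases Nat.lt_or_ge k 2 with hk | hk
    · have : k = 1 := by omega
      rw [this, hw1]; exact hb
    · exact hA₁sub _ (hwmem k hk h2)
  -- The key invariant: at each step, all unvisited points lie strictly on one
  -- side of the line through the last edge.
  have hInv : ∀ k, 1 ≤ k → k < A₁.card + 2 → ∃ σ : ℝ, (σ = 1 ∨ σ = -1) ∧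
      ∀ p ∈ A₁, (∀ j, 2 ≤ j → j ≤ k → w j ≠ p) →
        0 < σ * cross2 (w (k-1) - w k) (p - w k) := by
    intro k
    induction k with
    | zero => omega
    | succ m ih =>
      intro _ hlt
      by_cases hm : m = 0
      · subst hm
        refine ⟨-1, Or.inr rfl, ?_⟩
        intro p hp _
        have h2 := hA₁cr p hp
        simp only [Nat.add_sub_cancel, hw0, hw1, cross2, PiLp.sub_apply]
        nlinarith
      · have hm1 : 1 ≤ m := Nat.one_le_iff_ne_zero.2 hm
        obtain ⟨σ, hσ, hside⟩ := ih hm1 (by omega)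
        refine ⟨-σ, by rcases hσ with h | h <;> simp [h], ?_⟩
        intro p hp hunv
        have hqA₁ : w (m+1) ∈ A₁ := hwmem (m+1) (by omega) hlt
        have hq_side := hside (w (m+1)) hqA₁
          (fun j h2 hj => hwinj j (m+1) h2 (by omega) hlt)
        have hp_side := hside p hp (fun j h2 hj => hunv j h2 (by omega))
        have hpq : w (m+1) ≠ p := hunv (m+1) (by omega) (le_refl _)
        have hwmq : w m ≠ w (m+1) := by
          rcases Nat.lt_or_ge m 2 with h2 | h2
          · have hwm : w m = b := by
              have : m = 1 := by omega
              rw [this, hw1]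
            rw [hwm]
            intro h; apply hbA₁; rw [h]; exact hqA₁
          · exact hwinj m (m+1) h2 (by omega) hlt
        have hwmp : w m ≠ p := by
          rcases Nat.lt_or_ge m 2 with h2 | h2
          · have hwm : w m = b := by
              have : m = 1 := by omega
              rw [this, hw1]
            rw [hwm]
            intro h; apply hbA₁; rw [h]; exact hp
          · exact hunv m h2 (by omega)
        have hcol := hgen (w m) (hwA m hm1 (by omega)) (w (m+1)) (hA₁sub _ hqA₁)
          p (hA₁sub _ hp) hwmq hpq hwmp
        have hcr_ne : cross2 (w (m+1) - w m) (p - w m) ≠ 0 :=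
          fun h => hcol (collinear_of_cross2 _ _ _ h)
        have hang := hgreedy (m+1) (by omega) hlt p hp (fun j h2 hj => hunv j h2 (by omega))
        have hang' : InnerProductGeometry.angle (w (m-1) - w m) (w (m+1) - w m) ≤
            InnerProductGeometry.angle (w (m-1) - w m) (p - w m) := by
          have e1 : m + 1 - 2 = m - 1 := by omega
          have e2 : m + 1 - 1 = m := by omega
          rw [e1, e2] at hang
          rw [EuclideanGeometry.angle, EuclideanGeometry.angle] at hang
          simpa [vsub_eq_sub] using hang
        have hkey := key_side (w (m-1) - w m) (w (m+1) - w m) (p - w m) σ hσ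
          hq_side hp_side hang'
        have hne : σ * cross2 (w (m+1) - w m) (p - w m) ≠ 0 := by
          rcases hσ with h | h <;> rw [h] <;> simpa using hcr_ne
        have hpos : 0 < σ * cross2 (w (m+1) - w m) (p - w m) :=
          lt_of_le_of_ne hkey (Ne.symm hne)
        have hgoal_eq : -σ * cross2 (w (m+1-1) - w (m+1)) (p - w (m+1)) =
            σ * cross2 (w (m+1) - w m) (p - w m) := by
          simp only [Nat.add_sub_cancel, cross2, PiLp.sub_apply]
          ring
        rw [hgoal_eq]
        exact hpos
  refine ⟨?_, ?_, ?_⟩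
  · -- image statement
    have hinj : Set.InjOn w (Finset.Ico 2 (A₁.card+2) : Finset ℕ) := by
      intro i hi j hj hij
      simp only [Finset.coe_Ico, Set.mem_Ico] at hi hj
      by_contra hne
      rcases Nat.lt_or_ge i j with h | h
      · exact hwinj i j hi.1 h hj.2 hij
      · have h' : j < i := by omega
        exact hwinj j i hj.1 h' hi.2 hij.symm
    set T := (Finset.Ico 2 (A₁.card+2)).image w with hT
    have hTsub : T ⊆ A₁ := by
      intro p hp
      obtain ⟨i, hi, rfl⟩ := Finset.mem_image.1 hp
      rw [Finset.mem_Ico] at hi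
      exact hwmem i hi.1 hi.2
    have hcard : T.card = A₁.card := by
      rw [hT, Finset.card_image_of_injOn hinj, Nat.card_Ico]
      omega
    have hTeq : T = A₁ := Finset.eq_of_subset_of_card_le hTsub (by omega)
    ext x
    constructor
    · rintro ⟨i, hi, rfl⟩
      simp only [Set.mem_Iio] at hi
      rcases Nat.lt_or_ge i 2 with h2 | h2
      · interval_cases i
        · right; rw [hw0]; left; rfl
        · right; rw [hw1]; right; rfl
      · left
        exact_mod_cast hwmem i h2 hi
    · rintro (hx | hx | hx)
      · rw [← hTeq] at hx
        obtain ⟨i, hi, rfl⟩ := Finset.mem_image.1 (by exact_mod_cast hx)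
        rw [Finset.mem_Ico] at hi
        exact ⟨i, by simpa using hi.2, rfl⟩
      · exact ⟨0, by simp, by rw [hw0]; exact hx.symm ▸ rfl⟩
      · exact ⟨1, by simp only [Set.mem_Iio]; omega, by rw [hw1]; exact hx.symm ▸ rfl⟩
  · -- disjointness of nonadjacent segments
    intro i j hi hj hij
    obtain ⟨σ, hσ, hside⟩ := hInv (i+1) (by omega) hi
    simp only [Nat.add_sub_cancel] at hside
    have hFj := hside (w j) (hwmem j (by omega) (by omega))
      (fun j' h2 hj' => hwinj j' j h2 (by omega) (by omega))
    have hFj1 := hside (w (j+1)) (hwmem (j+1) (by omega) hj)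
      (fun j' h2 hj' => hwinj j' (j+1) h2 (by omega) hj)
    set F : EuclideanSpace ℝ (Fin 2) → ℝ := fun p =>
      σ * cross2 (w i - w (i+1)) (p - w (i+1)) with hF
    rw [Set.disjoint_left]
    rintro x ⟨s, t, hs, ht, hst, rfl⟩ ⟨s', t', hs', ht', hst', heq⟩
    have hFx1 : F (s • w i + t • w (i+1)) = 0 := by
      have hts : t = 1 - s := by linarith
      simp only [hF, cross2, PiLp.sub_apply, PiLp.add_apply, PiLp.smul_apply, smul_eq_mul, hts]
      ring
    have hFx2 : F (s' • w j + t' • w (j+1)) = s' * F (w j) + t' * F (w (j+1)) := by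
      have hts : t' = 1 - s' := by linarith
      simp only [hF, cross2, PiLp.sub_apply, PiLp.add_apply, PiLp.smul_apply, smul_eq_mul, hts]
      ring
    rw [heq] at hFx2
    have hor : 0 < s' ∨ 0 < t' := by
      by_contra hc
      push_neg at hc
      have : s' = 0 := le_antisymm hc.1 hs'
      have : t' = 0 := le_antisymm hc.2 ht'
      linarith
    have hpos : 0 < s' * F (w j) + t' * F (w (j+1)) := by
      rcases hor with h | h
      · have h1 : 0 < s' * F (w j) := mul_pos h hFj
        have h2 : 0 ≤ t' * F (w (j+1)) := mul_nonneg ht' hFj1.le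
        linarith
      · have h1 : 0 ≤ s' * F (w j) := mul_nonneg hs' hFj.le
        have h2 : 0 < t' * F (w (j+1)) := mul_pos h hFj1
        linarith
    rw [hFx2] at hFx1
    linarith
  · -- adjacent segments meet only at the shared vertex
    intro i hi
    have hmemi : w i ∈ A := by
      rcases Nat.eq_zero_or_pos i with h0 | h0
      · rw [h0, hw0]; exact ha
      · exact hwA i h0 (by omega)
    have hmemi1 : w (i+1) ∈ A := hwA (i+1) (by omega) (by omega)
    have hmemi2 : w (i+2) ∈ A := hA₁sub _ (hwmem (i+2) (by omega) hi)
    have haA₁ : a ∉ A₁ := by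
      intro hmem
      have := hA₁cr a hmem
      nlinarith
    have hd1 : w i ≠ w (i+1) := by
      rcases Nat.eq_zero_or_pos i with h0 | h0
      · rw [h0, hw0, hw1]; exact hab
      · rcases Nat.lt_or_ge i 2 with h2 | h2
        · have hwi : w i = b := by
            have : i = 1 := by omega
            rw [this, hw1]
          rw [hwi]
          intro h; apply hbA₁; rw [h]; exact hwmem (i+1) (by omega) (by omega)
        · exact hwinj i (i+1) h2 (by omega) (by omega)
    have hd2 : w (i+1) ≠ w (i+2) := by
      rcases Nat.lt_or_ge (i+1) 2 with h2 | h2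
      · have hwi : w (i+1) = b := by
          have : i = 0 := by omega
          rw [this, hw1]
        rw [hwi]
        intro h; apply hbA₁; rw [h]; exact hwmem (i+2) (by omega) (by omega)
      · exact hwinj (i+1) (i+2) h2 (by omega) hi
    have hd3 : w i ≠ w (i+2) := by
      rcases Nat.eq_zero_or_pos i with h0 | h0
      · have hwi : w i = a := by rw [h0, hw0]
        rw [hwi]
        intro h; apply haA₁; rw [h]; exact hwmem (i+2) (by omega) (by omega)
      · rcases Nat.lt_or_ge i 2 with h2 | h2
        · have hwi : w i = b := by
            have : i = 1 := by omega
            rw [this, hw1]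
          rw [hwi]
          intro h; apply hbA₁; rw [h]; exact hwmem (i+2) (by omega) (by omega)
        · exact hwinj i (i+2) h2 (by omega) hi
    have hcol := hgen (w i) hmemi (w (i+1)) hmemi1 (w (i+2)) hmemi2 hd1 hd2 hd3
    have hcr_ne : cross2 (w i - w (i+1)) (w (i+2) - w (i+1)) ≠ 0 := by
      intro h
      apply hcol
      have := collinear_of_cross2 (w (i+1)) (w i) (w (i+2)) h
      have hset : ({w (i+1), w i, w (i+2)} : Set (EuclideanSpace ℝ (Fin 2))) =
          {w i, w (i+1), w (i+2)} := Set.insert_comm _ _ _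
      rwa [hset] at this
    ext x
    simp only [Set.mem_inter_iff, Set.mem_singleton_iff]
    constructor
    · rintro ⟨⟨s, t, hs, ht, hst, rfl⟩, s', t', hs', ht', hst', heq⟩
      have e0 := congrArg (· 0) heq
      have e1 := congrArg (· 1) heq
      simp only [PiLp.add_apply, PiLp.smul_apply, smul_eq_mul] at e0 e1
      have e0' : s * (w i 0 - w (i+1) 0) = t' * (w (i+2) 0 - w (i+1) 0) := by
        linear_combination (-1 : ℝ) * e0 + w (i+1) 0 * hst' - w (i+1) 0 * hst
      have e1' : s * (w i 1 - w (i+1) 1) = t' * (w (i+2) 1 - w (i+1) 1) := by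
        linear_combination (-1 : ℝ) * e1 + w (i+1) 1 * hst' - w (i+1) 1 * hst
      have hkey : t' * cross2 (w i - w (i+1)) (w (i+2) - w (i+1)) = 0 := by
        simp only [cross2, PiLp.sub_apply]
        linear_combination (-(w i 0 - w (i+1) 0)) * e1' + (w i 1 - w (i+1) 1) * e0'
      rcases mul_eq_zero.1 hkey with h | h
      · -- t' = 0, so s' = 1 and x = w (i+1)
        have hs1 : s' = 1 := by linarith
        rw [← heq, h, hs1]
        ext k
        simp
      · exact absurd h hcr_ne
    · rintro rfl
      exact ⟨right_mem_segment ℝ _ _, left_mem_segment ℝ _ _⟩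
end
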